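/- For p, ξ ∈ ℂ with 0 < |p| < 1 and ξ ≠ 0, one has ∑_{n ∈ ℤ} (-1)ⁿ ξⁿ p^{n(n-1)/2} = ∏_{k=0}^∞ (1 - ξ p^k)(1 - p^{k+1})(1 - p^{k+1} ξ^{-1}), where the bilateral series converges absolutely. -/

import Mathlib

/-!
Substituting `x = -ξ p⁻ᴺ` into Cauchy's `q`-binomial theorem
`∏_{k<2N} (1 + x pᵏ) = ∑ₘ [2N, m]_p p^(m(m-1)/2) xᵐ` and splitting the product at `k = N` gives
the truncated identity `∏_{k<N} (1 - ξ pᵏ)(1 - p^(k+1) ξ⁻¹) = ∑_{|j| ≤ N} θⱼ [2N, N+j]_p`, where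
`θⱼ = (-1)ʲ ξʲ p^(j(j-1)/2)`. As `N → ∞`, `[2N, N+j]_p = (p;p)_{2N} / ((p;p)_{N+j} (p;p)_{N-j})`
tends to `1 / (p;p)_∞`, and these coefficients are uniformly bounded because `(p;p)ₙ` and its
inverse converge. Since `∑ ‖θⱼ‖ < ∞`, dominated convergence (Tannery's theorem) passes to the limit.
-/

open Finset Filter Topology

namespace JacobiTriple

section CommRing

variable {R : Type*} [CommRing R]

def gaussBinomial (q : R) : ℕ → ℕ → R
  | _, 0 => 1
  | 0, _ + 1 => 0
  | n + 1, m + 1 => gaussBinomial q n m + q ^ (m + 1) * gaussBinomial q n (m + 1)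

def qPochhammer (q : R) (n : ℕ) : R := ∏ i ∈ range n, (1 - q ^ (i + 1))

def centeredGaussBinomial (q : R) (N : ℕ) (j : ℤ) : R :=
  if -(N : ℤ) ≤ j then gaussBinomial q (2 * N) (j + N).toNat else 0

variable (q : R)

@[simp] lemma gaussBinomial_zero_right (n : ℕ) : gaussBinomial q n 0 = 1 := by
  cases n <;> rfl

lemma gaussBinomial_succ_succ (n m : ℕ) :
    gaussBinomial q (n + 1) (m + 1) =
      gaussBinomial q n m + q ^ (m + 1) * gaussBinomial q n (m + 1) := rfl

lemma gaussBinomial_eq_zero_of_lt {n m : ℕ} (h : n < m) : gaussBinomial q n m = 0 := by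
  induction n generalizing m with
  | zero => obtain ⟨m, rfl⟩ := Nat.exists_eq_add_of_lt h; rfl
  | succ n ih =>
    obtain ⟨m, rfl⟩ : ∃ k, m = k + 1 := Nat.exists_eq_add_one_of_ne_zero (by omega)
    rw [gaussBinomial_succ_succ, ih (by omega), ih (by omega), mul_zero, add_zero]

lemma qPochhammer_succ (n : ℕ) : qPochhammer q (n + 1) = qPochhammer q n * (1 - q ^ (n + 1)) :=
  prod_range_succ _ _

theorem gaussBinomial_mul_qPochhammer {n m : ℕ} (h : m ≤ n) :
    gaussBinomial q n m * qPochhammer q m * qPochhammer q (n - m) = qPochhammer q n := by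
  induction n generalizing m with
  | zero => obtain rfl := Nat.le_zero.1 h; simp [qPochhammer]
  | succ n ih =>
    rcases m with _ | m
    · simp [qPochhammer]
    have hm : m ≤ n := by omega
    have hlow := ih hm
    have hhigh : gaussBinomial q n (m + 1) * qPochhammer q (m + 1) * qPochhammer q (n - m) =
        qPochhammer q n * (1 - q ^ (n - m)) := by
      rcases hm.eq_or_lt with rfl | hlt
      · simp [gaussBinomial_eq_zero_of_lt q (Nat.lt_succ_self m)]
      · obtain ⟨k, hk⟩ : ∃ k, n - m = k + 1 := ⟨n - (m + 1), by omega⟩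
        rw [hk, qPochhammer_succ q k, ← ih hlt, show n - (m + 1) = k by omega]
        ring
    have hpow : q ^ (m + 1) * q ^ (n - m) = q ^ (n + 1) := by rw [← pow_add]; congr 1; omega
    rw [gaussBinomial_succ_succ, Nat.add_sub_add_right, qPochhammer_succ q n]
    linear_combination (1 - q ^ (m + 1)) * hlow + q ^ (m + 1) * hhigh - qPochhammer q n * hpow +
      gaussBinomial q n m * qPochhammer q (n - m) * qPochhammer_succ q m

theorem prod_one_add_mul_pow_eq_sum_gaussBinomial (x : R) (n : ℕ) :
    ∏ k ∈ range n, (1 + x * q ^ k) =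
      ∑ m ∈ range (n + 1), gaussBinomial q n m * ∏ i ∈ range m, (x * q ^ i) := by
  induction n generalizing x with
  | zero => simp
  | succ n ih =>
    set P : ℕ → R := fun m => ∏ i ∈ range m, (x * q ^ i)
    have hPq : ∀ m, ∏ i ∈ range m, (x * q * q ^ i) = q ^ m * P m := fun m => by
      simp only [P, mul_right_comm x q, mul_assoc, prod_mul_distrib, prod_const, card_range]
      ring
    have hPsucc : ∀ m, x * (q ^ m * P m) = P (m + 1) := fun m => by
      simp only [P, prod_range_succ]; ring
    set f : ℕ → R := fun m => q ^ m * gaussBinomial q n m * P m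
    have hshift : ∑ m ∈ range (n + 1), f (m + 1) + 1 = ∑ m ∈ range (n + 1), f m := by
      have h := sum_range_succ f (n + 1)
      have hf0 : f 0 = 1 := by simp [f, P]
      have hfn : f (n + 1) = 0 := by simp [f, gaussBinomial_eq_zero_of_lt q (Nat.lt_succ_self n)]
      rwa [sum_range_succ', hf0, hfn, add_zero] at h
    calc ∏ k ∈ range (n + 1), (1 + x * q ^ k)
        = (∏ k ∈ range n, (1 + x * q * q ^ k)) * (1 + x) := by
          simp only [prod_range_succ', pow_succ', mul_assoc, pow_zero, mul_one]
      _ = ∑ m ∈ range (n + 1), f m + ∑ m ∈ range (n + 1), gaussBinomial q n m * P (m + 1) := by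
          simp only [ih, hPq, sum_mul, mul_add, mul_one, f, ← hPsucc]
          rw [← sum_add_distrib, ← sum_add_distrib]
          exact sum_congr rfl fun m _ => by ring
      _ = ∑ m ∈ range (n + 1 + 1), gaussBinomial q (n + 1) m * P m := by
          rw [sum_range_succ' _ (n + 1), ← hshift]
          simp only [gaussBinomial_succ_succ, add_mul, sum_add_distrib, gaussBinomial_zero_right]
          simp only [f, P, prod_range_zero, mul_one]
          ring

end CommRing

section Field

variable {K : Type*} [Field K] {p ξ : K}

def thetaTerm (p ξ : K) (n : ℤ) : K := (-1) ^ n * ξ ^ n * p ^ (n * (n - 1) / 2)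

lemma thetaTerm_add_one (hp : p ≠ 0) (hξ : ξ ≠ 0) (n : ℤ) :
    thetaTerm p ξ (n + 1) = thetaTerm p ξ n * (-ξ * p ^ n) := by
  have hexp : (n + 1) * (n + 1 - 1) / 2 = n * (n - 1) / 2 + n := by
    rw [show (n + 1) * (n + 1 - 1) = n * (n - 1) + n * 2 by ring,
      Int.add_mul_ediv_right _ _ two_ne_zero]
  simp only [thetaTerm, hexp, zpow_add₀ hp, zpow_add_one₀ hξ,
    zpow_add_one₀ (by norm_num : (-1 : K) ≠ 0)]
  ring

lemma thetaTerm_add_natCast (hp : p ≠ 0) (hξ : ξ ≠ 0) (j : ℤ) (m : ℕ) :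
    thetaTerm p ξ (j + m) = thetaTerm p ξ j * ∏ i ∈ range m, (-ξ * p ^ (j + i)) := by
  induction m with
  | zero => simp
  | succ m ih =>
    rw [Nat.cast_succ, ← add_assoc, thetaTerm_add_one hp hξ, ih, prod_range_succ, mul_assoc]

theorem finite_jacobi_triple_product (hp : p ≠ 0) (hξ : ξ ≠ 0) (N : ℕ) :
    (∏ k ∈ range N, (1 - ξ * p ^ k)) * ∏ k ∈ range N, (1 - p ^ (k + 1) * ξ⁻¹) =
      ∑ m ∈ range (2 * N + 1), thetaTerm p ξ (m - N) * gaussBinomial p (2 * N) m := by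
  set x := -ξ * p ^ (-N : ℤ)
  have hx : ∀ i : ℕ, x * p ^ i = -ξ * p ^ (-N + i : ℤ) := fun i => by
    rw [zpow_add₀ hp, zpow_natCast, mul_assoc]
  have hterm : ∀ m : ℕ, thetaTerm p ξ (m - N) = thetaTerm p ξ (-N) * ∏ i ∈ range m, (x * p ^ i) :=
    fun m => by rw [← neg_add_eq_sub, thetaTerm_add_natCast hp hξ]; simp only [hx]
  have hpN : x * p ^ N = -ξ := by
    rw [hx, neg_add_cancel, zpow_zero, mul_one]
  have hfactor : ∀ k ∈ range N, 1 + x * p ^ k = x * p ^ k * (1 - p ^ (N - 1 - k + 1) * ξ⁻¹) := by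
    intro k hk
    have hpow : p ^ k * p ^ (N - 1 - k + 1) = p ^ N := by
      rw [← pow_add]; congr 1; have := mem_range.1 hk; omega
    have hinv : x * p ^ k * (p ^ (N - 1 - k + 1) * ξ⁻¹) = -1 := by
      rw [← mul_assoc, mul_assoc x, hpow, hpN, neg_mul, mul_inv_cancel₀ hξ]
    rw [mul_sub, mul_one, hinv]
    ring
  have hlow : thetaTerm p ξ (-N) * ∏ k ∈ range N, (1 + x * p ^ k) =
      ∏ k ∈ range N, (1 - p ^ (k + 1) * ξ⁻¹) := by
    rw [prod_congr rfl hfactor, prod_mul_distrib, ← mul_assoc, ← hterm, sub_self,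
      prod_range_reflect (fun k => 1 - p ^ (k + 1) * ξ⁻¹)]
    simp [thetaTerm]
  have hhigh : ∀ k ∈ range N, 1 + x * p ^ (N + k) = 1 - ξ * p ^ k := fun k _ => by
    rw [pow_add, ← mul_assoc, hpN]; ring
  calc (∏ k ∈ range N, (1 - ξ * p ^ k)) * ∏ k ∈ range N, (1 - p ^ (k + 1) * ξ⁻¹)
      = thetaTerm p ξ (-N) * ∏ k ∈ range (2 * N), (1 + x * p ^ k) := by
        rw [two_mul, prod_range_add, prod_congr rfl hhigh, ← hlow]; ring
    _ = _ := by
        rw [prod_one_add_mul_pow_eq_sum_gaussBinomial, mul_sum]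
        exact sum_congr rfl fun m _ => by rw [hterm]; ring

theorem tsum_thetaTerm_mul_centeredGaussBinomial [TopologicalSpace K] (hp : p ≠ 0) (hξ : ξ ≠ 0)
    (N : ℕ) :
    ∑' j : ℤ, thetaTerm p ξ j * centeredGaussBinomial p N j =
      (∏ k ∈ range N, (1 - ξ * p ^ k)) * ∏ k ∈ range N, (1 - p ^ (k + 1) * ξ⁻¹) := by
  have hinj : Function.Injective fun m : ℕ => (m : ℤ) - N := fun a b h => by simpa using h
  have hsupp : Function.support (fun j => thetaTerm p ξ j * centeredGaussBinomial p N j) ⊆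
      Set.range fun m : ℕ => (m : ℤ) - N := by
    intro j hj
    by_cases h : -(N : ℤ) ≤ j
    · exact ⟨(j + N).toNat, by dsimp only; omega⟩
    · exact absurd (by simp [centeredGaussBinomial, h]) hj
  have hcoeff : ∀ m : ℕ, centeredGaussBinomial p N (m - N) = gaussBinomial p (2 * N) m :=
    fun m => by simp [centeredGaussBinomial]
  rw [finite_jacobi_triple_product hp hξ, ← hinj.tsum_eq hsupp]
  simp only [hcoeff]
  exact tsum_eq_sum fun m hm => by
    rw [gaussBinomial_eq_zero_of_lt _ (by simpa using hm), mul_zero]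

end Field

section Normed

variable {𝕜 : Type*} [NormedField 𝕜] {q p ξ : 𝕜}

lemma one_sub_pow_succ_ne_zero (hq : ‖q‖ < 1) (i : ℕ) : 1 - q ^ (i + 1) ≠ 0 := by
  refine sub_ne_zero.2 fun h => ?_
  have : ‖q ^ (i + 1)‖ < 1 := by rw [norm_pow]; exact pow_lt_one₀ (norm_nonneg q) hq (by omega)
  simp [← h] at this

lemma qPochhammer_ne_zero (hq : ‖q‖ < 1) (n : ℕ) : qPochhammer q n ≠ 0 :=
  prod_ne_zero_iff.2 fun i _ => one_sub_pow_succ_ne_zero hq i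

lemma gaussBinomial_eq_mul_inv (hq : ‖q‖ < 1) {n m : ℕ} (h : m ≤ n) :
    gaussBinomial q n m =
      qPochhammer q n * (qPochhammer q m)⁻¹ * (qPochhammer q (n - m))⁻¹ := by
  rw [← gaussBinomial_mul_qPochhammer q h]
  field_simp [qPochhammer_ne_zero hq]

lemma norm_thetaTerm_natCast_succ (hp : p ≠ 0) (hξ : ξ ≠ 0) (n : ℕ) :
    ‖thetaTerm p ξ (n + 1 : ℕ)‖ = ‖ξ‖ * ‖p‖ ^ n * ‖thetaTerm p ξ n‖ := by
  rw [Nat.cast_succ, thetaTerm_add_one hp hξ, norm_mul, norm_mul, norm_neg, zpow_natCast,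
    norm_pow]
  ring

lemma norm_thetaTerm_neg_natCast_succ (hp : p ≠ 0) (hξ : ξ ≠ 0) (n : ℕ) :
    ‖thetaTerm p ξ (-(n + 1 : ℕ))‖ = ‖ξ‖⁻¹ * ‖p‖ * ‖p‖ ^ n * ‖thetaTerm p ξ (-n)‖ := by
  have hstep := thetaTerm_add_one hp hξ (-(n + 1 : ℕ))
  rw [show -((n + 1 : ℕ) : ℤ) + 1 = -n by push_cast; ring] at hstep
  have hξ0 : ‖ξ‖ ≠ 0 := norm_ne_zero_iff.2 hξ
  have hp0 : ‖p‖ ≠ 0 := norm_ne_zero_iff.2 hp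
  rw [hstep, norm_mul, norm_mul, norm_neg, norm_zpow, zpow_neg, zpow_natCast]
  field_simp
  ring

lemma summable_norm_thetaTerm (hp : p ≠ 0) (hp1 : ‖p‖ < 1) (hξ : ξ ≠ 0) :
    Summable fun n : ℤ => ‖thetaTerm p ξ n‖ := by
  have hsmall : ∀ c : ℝ, ∀ᶠ n : ℕ in atTop, c * ‖p‖ ^ n ≤ 1 / 2 := fun c => by
    have h := (tendsto_pow_atTop_nhds_zero_of_lt_one (norm_nonneg p) hp1).const_mul c
    rw [mul_zero] at h
    exact h.eventually_le_const (by norm_num)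
  refine Summable.of_nat_of_neg ?_ ?_ <;>
    refine summable_of_ratio_norm_eventually_le (r := 1 / 2) (by norm_num) ?_
  · filter_upwards [hsmall ‖ξ‖] with n hn
    rw [norm_norm, norm_norm, norm_thetaTerm_natCast_succ hp hξ]
    exact mul_le_mul_of_nonneg_right hn (norm_nonneg _)
  · filter_upwards [hsmall (‖ξ‖⁻¹ * ‖p‖)] with n hn
    rw [norm_norm, norm_norm, norm_thetaTerm_neg_natCast_succ hp hξ]
    exact mul_le_mul_of_nonneg_right hn (norm_nonneg _)

variable [CompleteSpace 𝕜]

lemma multipliable_one_sub_mul_pow (hq : ‖q‖ < 1) (z : 𝕜) :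
    Multipliable fun k : ℕ => 1 - z * q ^ k := by
  simpa [sub_eq_add_neg] using multipliable_one_add_of_summable (f := fun k => -(z * q ^ k))
    (by simpa [norm_mul, norm_pow] using
      (summable_geometric_of_lt_one (norm_nonneg q) hq).mul_left ‖z‖)

lemma multipliable_one_sub_pow_succ_mul (hq : ‖q‖ < 1) (z : 𝕜) :
    Multipliable fun k : ℕ => 1 - q ^ (k + 1) * z :=
  (multipliable_one_sub_mul_pow hq (q * z)).congr fun k => by ring

lemma multipliable_one_sub_pow_succ (hq : ‖q‖ < 1) :
    Multipliable fun k : ℕ => 1 - q ^ (k + 1) := by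
  simpa using multipliable_one_sub_pow_succ_mul hq 1

lemma tendsto_qPochhammer (hq : ‖q‖ < 1) :
    Tendsto (qPochhammer q) atTop (𝓝 (∏' k : ℕ, (1 - q ^ (k + 1)))) :=
  (multipliable_one_sub_pow_succ hq).hasProd.tendsto_prod_nat

lemma tprod_one_sub_pow_succ_ne_zero (hq : ‖q‖ < 1) : ∏' k : ℕ, (1 - q ^ (k + 1)) ≠ 0 := by
  have hsum : Summable fun k : ℕ => ‖-q ^ (k + 1)‖ := by
    simpa [norm_pow] using (summable_nat_add_iff 1).2
      (summable_geometric_of_lt_one (norm_nonneg q) hq)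
  simpa [sub_eq_add_neg] using tprod_one_add_ne_zero_of_summable
    (fun i => by simpa [sub_eq_add_neg] using one_sub_pow_succ_ne_zero hq i) hsum

lemma exists_norm_gaussBinomial_le (hq : ‖q‖ < 1) : ∃ C, ∀ n m, ‖gaussBinomial q n m‖ ≤ C := by
  obtain ⟨A, hA⟩ := (Metric.isBounded_range_of_tendsto _ (tendsto_qPochhammer hq)).exists_norm_le
  obtain ⟨B, hB⟩ := (Metric.isBounded_range_of_tendsto _
    ((tendsto_qPochhammer hq).inv₀ (tprod_one_sub_pow_succ_ne_zero hq))).exists_norm_le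
  have hA0 : 0 ≤ A := (norm_nonneg _).trans (hA _ ⟨0, rfl⟩)
  have hB0 : 0 ≤ B := (norm_nonneg _).trans (hB _ ⟨0, rfl⟩)
  refine ⟨A * B * B, fun n m => ?_⟩
  rcases le_or_gt m n with h | h
  · rw [gaussBinomial_eq_mul_inv hq h, norm_mul, norm_mul]
    exact mul_le_mul (mul_le_mul (hA _ ⟨n, rfl⟩) (hB _ ⟨m, rfl⟩) (norm_nonneg _) hA0)
      (hB _ ⟨n - m, rfl⟩) (norm_nonneg _) (mul_nonneg hA0 hB0)
  · rw [gaussBinomial_eq_zero_of_lt q h, norm_zero]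
    positivity

lemma tendsto_centeredGaussBinomial (hq : ‖q‖ < 1) (j : ℤ) :
    Tendsto (fun N : ℕ => centeredGaussBinomial q N j) atTop
      (𝓝 (∏' k : ℕ, (1 - q ^ (k + 1)))⁻¹) := by
  have hL := tprod_one_sub_pow_succ_ne_zero hq
  have hQ := tendsto_qPochhammer hq
  have htop : ∀ f : ℕ → ℕ, (∀ N, N - j.natAbs ≤ f N) → Tendsto f atTop atTop := fun f hf =>
    tendsto_atTop_atTop.2 fun b => ⟨b + j.natAbs, fun N hN => by have := hf N; omega⟩
  have hlim := ((hQ.comp (htop (fun N => 2 * N) fun N => by omega)).mul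
    ((hQ.comp (htop (fun N => (j + N).toNat) fun N => by omega)).inv₀ hL)).mul
    ((hQ.comp (htop (fun N => 2 * N - (j + N).toNat) fun N => by omega)).inv₀ hL)
  rw [mul_inv_cancel₀ hL, one_mul] at hlim
  refine hlim.congr' ?_
  filter_upwards [eventually_ge_atTop j.natAbs] with N hN
  rw [centeredGaussBinomial, if_pos (by omega), gaussBinomial_eq_mul_inv hq (by omega)]
  rfl

theorem jacobi_triple_product (hp : p ≠ 0) (hp1 : ‖p‖ < 1) (hξ : ξ ≠ 0) :
    ∑' n : ℤ, thetaTerm p ξ n =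
      (∏' k : ℕ, (1 - ξ * p ^ k)) * (∏' k : ℕ, (1 - p ^ (k + 1))) *
        ∏' k : ℕ, (1 - p ^ (k + 1) * ξ⁻¹) := by
  obtain ⟨C, hC⟩ := exists_norm_gaussBinomial_le hp1
  have hbound : ∀ N j, ‖thetaTerm p ξ j * centeredGaussBinomial p N j‖ ≤
      C * ‖thetaTerm p ξ j‖ := fun N j => by
    have hc : ‖centeredGaussBinomial p N j‖ ≤ C := by
      unfold centeredGaussBinomial
      split_ifs
      · exact hC _ _
      · simpa using (norm_nonneg _).trans (hC 0 0)
    rw [norm_mul, mul_comm]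
    exact mul_le_mul_of_nonneg_right hc (norm_nonneg _)
  have hsum := tendsto_tsum_of_dominated_convergence
    ((summable_norm_thetaTerm hp hp1 hξ).mul_left C)
    (fun j => (tendsto_centeredGaussBinomial hp1 j).const_mul (thetaTerm p ξ j))
    (.of_forall hbound)
  simp only [tsum_thetaTerm_mul_centeredGaussBinomial hp hξ, tsum_mul_right] at hsum
  have hprod := (multipliable_one_sub_mul_pow hp1 ξ).hasProd.tendsto_prod_nat.mul
    (multipliable_one_sub_pow_succ_mul hp1 ξ⁻¹).hasProd.tendsto_prod_nat
  have hL := tprod_one_sub_pow_succ_ne_zero hp1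
  rw [mul_right_comm, ← tendsto_nhds_unique hsum hprod, inv_mul_cancel_right₀ hL]

end Normed

end JacobiTriple

open JacobiTriple in
theorem stmt_11 (p ξ : ℂ) (hp0 : 0 < ‖p‖) (hp1 : ‖p‖ < 1) (hξ : ξ ≠ 0) :
    Summable (fun n : ℤ => ‖(-1 : ℂ) ^ n * ξ ^ n * p ^ (n * (n - 1) / 2)‖) ∧
    ∑' n : ℤ, (-1 : ℂ) ^ n * ξ ^ n * p ^ (n * (n - 1) / 2) =
      ∏' k : ℕ, ((1 - ξ * p ^ k) * (1 - p ^ (k + 1)) * (1 - p ^ (k + 1) * ξ⁻¹)) := by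
  have hp : p ≠ 0 := norm_pos_iff.1 hp0
  have hm₁ := multipliable_one_sub_mul_pow hp1 ξ
  have hm₂ := multipliable_one_sub_pow_succ hp1
  refine ⟨summable_norm_thetaTerm hp hp1 hξ, ?_⟩
  rw [(hm₁.mul hm₂).tprod_mul (multipliable_one_sub_pow_succ_mul hp1 ξ⁻¹), hm₁.tprod_mul hm₂]
  exact jacobi_triple_product hp hp1 hξ
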